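/- arXiv:0711.3669 — 2 statements merged into one kernel-verified Lean document; each statement's English description precedes it below -/
import Mathlib

section
/- Let (E_*(x))_{x∈I} be a family of chain complexes of Banach spaces, each 1-split via contractions, and suppose for each n the boundary maps d_n^x are uniformly bounded in x. Then for any p ∈ [1,∞], the ℓᵖ-direct sum complex ⊕ᵖ_{x∈I} E_*(x) is 1-split, and in particular exact. -/
open scoped ENNReal

/-! The contractions `s x n` are uniformly bounded, so they assemble coordinatewise into a
contraction `S n` of the `ℓᵖ`-sum (`lp.mapCLM`). The splitting identities for `S` and `D` are
checked coordinatewise, and a complex carrying such a contracting homotopy is exact. -/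

theorem Function.exact_of_contractingHomotopy {A B C : Type*} [AddZeroClass A] [AddZeroClass B]
    {f : B → A} {g : C → B} (s : B → C) (t : A → B) (hfg : ∀ c, f (g c) = 0) (ht : t 0 = 0)
    (hst : ∀ b, t (f b) + g (s b) = b) : Function.Exact g f := by
  intro b
  refine ⟨fun hb => ⟨s b, ?_⟩, fun ⟨c, hc⟩ => hc ▸ hfg c⟩
  simpa only [hb, ht, zero_add] using hst b

theorem lp_sum_of_one_split_is_one_split_general
    {ι : Type*} (p : ℝ≥0∞) [Fact (1 ≤ p)]
    (E : ι → ℕ → Type*) [∀ x n, NormedAddCommGroup (E x n)] [∀ x n, NormedSpace ℂ (E x n)]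
    (d : ∀ x n, E x (n + 1) →L[ℂ] E x n)
    (hcomplex : ∀ x n (v : E x (n + 2)), d x n (d x (n + 1) v) = 0)
    (s : ∀ x n, E x n →L[ℂ] E x (n + 1))
    (hscontr : ∀ x n, ‖s x n‖ ≤ 1)
    (hs0 : ∀ x (v : E x 0), d x 0 (s x 0 v) = v)
    (hsj : ∀ x (j : ℕ) (v : E x (j + 1)),
      s x j (d x j v) + d x (j + 1) (s x (j + 1) v) = v)
    (D : ∀ n, lp (fun x => E x (n + 1)) p →L[ℂ] lp (fun x => E x n) p)
    (hD : ∀ n (v : lp (fun x => E x (n + 1)) p) (x : ι), D n v x = d x n (v x)) :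
    (∃ S : ∀ n, lp (fun x => E x n) p →L[ℂ] lp (fun x => E x (n + 1)) p,
        (∀ n (v : lp (fun x => E x n) p) (x : ι), S n v x = s x n (v x)) ∧
        (∀ n, ‖S n‖ ≤ 1) ∧
        (∀ v, D 0 (S 0 v) = v) ∧
        (∀ (n : ℕ) (v : lp (fun x => E x (n + 1)) p),
          S n (D n v) + D (n + 1) (S (n + 1) v) = v)) ∧
      Function.Surjective (D 0) ∧
      (∀ n : ℕ, {v : lp (fun x => E x (n + 1)) p | D n v = 0} = Set.range (D (n + 1))) := by
  let S n : lp (fun x => E x n) p →L[ℂ] lp (fun x => E x (n + 1)) p :=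
    lp.mapCLM p (fun x => s x n) zero_le_one (hscontr · n)
  have hS n (v : lp (fun x => E x n) p) x : S n v x = s x n (v x) := rfl
  have hDS0 v : D 0 (S 0 v) = v := lp.ext <| funext fun x => by rw [hD, hS, hs0]
  have hSD n v : S n (D n v) + D (n + 1) (S (n + 1) v) = v :=
    lp.ext <| funext fun x => by rw [lp.coeFn_add, Pi.add_apply, hS, hD, hD, hS, hsj]
  have hDD n (w : lp (fun x => E x (n + 2)) p) : D n (D (n + 1) w) = 0 :=
    lp.ext <| funext fun x => by rw [hD, hD, hcomplex, lp.coeFn_zero, Pi.zero_apply]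
  refine ⟨⟨S, hS, fun n => lp.norm_mapCLM_le _ _ _ _, hDS0, hSD⟩,
    fun v => ⟨S 0 v, hDS0 v⟩, fun n => Set.ext fun v => ?_⟩
  exact Function.exact_of_contractingHomotopy (S (n + 1)) (S n) (hDD n) (map_zero _) (hSD n) v

/-- An `ℓᵖ`-direct sum of uniformly bounded, `1`-split chain complexes of Banach spaces is
again `1`-split, and in particular exact. Here `D` is the coordinatewise boundary map of
the sum complex. -/
theorem lp_sum_of_one_split_is_one_split
    {ι : Type*} (p : ℝ≥0∞) [Fact (1 ≤ p)]
    (E : ι → ℕ → Type*) [∀ x n, NormedAddCommGroup (E x n)] [∀ x n, NormedSpace ℂ (E x n)]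
    [∀ x n, CompleteSpace (E x n)]
    (d : ∀ x n, E x (n + 1) →L[ℂ] E x n)
    (hcomplex : ∀ x n (v : E x (n + 2)), d x n (d x (n + 1) v) = 0)
    (hdbdd : ∀ n, ∃ C : ℝ, ∀ x, ‖d x n‖ ≤ C)
    (s : ∀ x n, E x n →L[ℂ] E x (n + 1))
    (hscontr : ∀ x n, ‖s x n‖ ≤ 1)
    (hs0 : ∀ x (v : E x 0), d x 0 (s x 0 v) = v)
    (hsj : ∀ x (j : ℕ) (v : E x (j + 1)),
      s x j (d x j v) + d x (j + 1) (s x (j + 1) v) = v)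
    (D : ∀ n, lp (fun x => E x (n + 1)) p →L[ℂ] lp (fun x => E x n) p)
    (hD : ∀ n (v : lp (fun x => E x (n + 1)) p) (x : ι), D n v x = d x n (v x)) :
    (∃ S : ∀ n, lp (fun x => E x n) p →L[ℂ] lp (fun x => E x (n + 1)) p,
        (∀ n (v : lp (fun x => E x n) p) (x : ι), S n v x = s x n (v x)) ∧
        (∀ n, ‖S n‖ ≤ 1) ∧
        (∀ v, D 0 (S 0 v) = v) ∧
        (∀ (n : ℕ) (v : lp (fun x => E x (n + 1)) p),
          S n (D n v) + D (n + 1) (S (n + 1) v) = v)) ∧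
      Function.Surjective (D 0) ∧
      (∀ n : ℕ, {v : lp (fun x => E x (n + 1)) p | D n v = 0} = Set.range (D (n + 1))) :=
  lp_sum_of_one_split_is_one_split_general p E d hcomplex s hscontr hs0 hsj D hD
end

section
/- Every free group is commutative-transitive: in a free group F, if a, b, c are nontrivial elements with ab = ba and bc = cb, then ac = ca. -/
/-!
By Nielsen–Schreier the centralizer of `b ≠ 1` is itself a free group, and `b` is a nontrivial
central element of it. A free group with a nontrivial central element `z` has at most one
generator: if `z` commutes with a generator `of j`, then every letter of the reduced word of `z`
is `j` or `j⁻¹`. So the centralizer is cyclic, hence abelian, and it contains `a` and `c`.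
-/

theorem List.eq_replicate_of_append_singleton_eq_cons {α : Type*} {l : List α} {a : α}
    (h : l ++ [a] = a :: l) : l = List.replicate l.length a := by
  induction l with
  | nil => rfl
  | cons b l ih =>
    obtain ⟨rfl, h⟩ := List.cons_eq_cons.mp h
    rw [List.length_cons, List.replicate_succ, ← ih h]

namespace FreeGroup

variable {α : Type*}

section DecidableEq

variable [DecidableEq α]

theorem toWord_mk_singleton_mul {ℓ : α × Bool} {x : FreeGroup α}
    (hx : x.toWord.head? ≠ some (ℓ.1, !ℓ.2)) : (mk [ℓ] * x).toWord = ℓ :: x.toWord := by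
  rw [toWord_mul, toWord_mk, reduce_singleton, List.singleton_append, reduce.cons, reduce_toWord]
  rcases hw : x.toWord with _ | ⟨m, w⟩
  · rfl
  · rw [hw] at hx
    refine if_neg fun ⟨h1, h2⟩ => hx ?_
    simp [h1, h2]

theorem toWord_eq_replicate_of_commute_mk_singleton {ℓ : α × Bool} {x : FreeGroup α}
    (h : Commute x (mk [ℓ])) (hx : x.toWord.head? ≠ some (ℓ.1, !ℓ.2)) :
    x.toWord = List.replicate x.toWord.length ℓ := by
  -- `x * mk [ℓ] = mk [ℓ] * x` has the word `ℓ :: x.toWord`, a sublist of `x.toWord ++ [ℓ]`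
  -- of the same length, so no cancellation happens on the right either.
  refine List.eq_replicate_of_append_singleton_eq_cons (List.Sublist.eq_of_length ?_ ?_).symm
  · rw [← toWord_mk_singleton_mul hx, ← h.eq]
    simpa using toWord_mul_sublist x (mk [ℓ])
  · simp

theorem fst_eq_of_mem_toWord_of_commute_of {j : α} {x : FreeGroup α} (h : Commute x (of j))
    {ℓ : α × Bool} (hℓ : ℓ ∈ x.toWord) : ℓ.1 = j := by
  suffices ∃ b, x.toWord = List.replicate x.toWord.length (j, b) by
    obtain ⟨b, hb⟩ := this
    rw [hb] at hℓ
    simp [List.eq_of_mem_replicate hℓ]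
  by_cases hhead : x.toWord.head? = some (j, false)
  · exact ⟨false, toWord_eq_replicate_of_commute_mk_singleton h.inv_right (by simp [hhead])⟩
  · exact ⟨true, toWord_eq_replicate_of_commute_mk_singleton h (by simpa using hhead)⟩

end DecidableEq

theorem subsingleton_of_mem_center {z : FreeGroup α} (hz : z ∈ Subgroup.center (FreeGroup α))
    (hz1 : z ≠ 1) : Subsingleton α := by
  classical
  obtain ⟨ℓ, hℓ⟩ := List.exists_mem_of_ne_nil _ (mt toWord_eq_nil_iff.mp hz1)
  refine ⟨fun i j => ?_⟩
  rw [← fst_eq_of_mem_toWord_of_commute_of (Subgroup.mem_center_iff.mp hz (of i)).symm hℓ,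
    fst_eq_of_mem_toWord_of_commute_of (Subgroup.mem_center_iff.mp hz (of j)).symm hℓ]

instance isMulCommutative_of_subsingleton [Subsingleton α] : IsMulCommutative (FreeGroup α) := by
  cases isEmpty_or_nonempty α with
  | inl _ => exact .of_comm fun _ _ => Subsingleton.elim _ _
  | inr hα =>
    have : Unique α := uniqueOfSubsingleton hα.some
    infer_instance

end FreeGroup

theorem IsFreeGroup.isMulCommutative_of_mem_center {G : Type*} [Group G] [IsFreeGroup G] {z : G}
    (hz : z ∈ Subgroup.center G) (hz1 : z ≠ 1) : IsMulCommutative G := by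
  let e := IsFreeGroup.toFreeGroup G
  have := FreeGroup.subsingleton_of_mem_center (MulEquivClass.apply_mem_center e hz)
    ((map_ne_one_iff e e.injective).mpr hz1)
  exact .of_comm fun x y => e.injective (by simp only [map_mul, mul_comm' (e x)])

theorem freeGroup_commutative_transitive_general {α : Type*} (a b c : FreeGroup α)
    (hb : b ≠ 1)
    (hab : Commute a b) (hbc : Commute b c) : Commute a c := by
  let K := Subgroup.centralizer {b}
  have hbK : (⟨b, Subgroup.mem_centralizer_singleton_iff.mpr rfl⟩ : K) ∈ Subgroup.center K :=
    Subgroup.mem_center_iff.mpr fun k => Subtype.ext (Subgroup.mem_centralizer_singleton_iff.mp k.2)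
  have : IsMulCommutative K := IsFreeGroup.isMulCommutative_of_mem_center hbK (by simpa using hb)
  exact setLike_mul_comm (Subgroup.mem_centralizer_singleton_iff.mpr hab.eq)
    (Subgroup.mem_centralizer_singleton_iff.mpr hbc.eq.symm)

/-- Every free group is commutative-transitive. -/
theorem freeGroup_commutative_transitive {α : Type*} (a b c : FreeGroup α)
    (ha : a ≠ 1) (hb : b ≠ 1) (hc : c ≠ 1)
    (hab : Commute a b) (hbc : Commute b c) : Commute a c :=
  freeGroup_commutative_transitive_general a b c hb hab hbc
end
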